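/- Let Q ∈ ℂ^{m×n} (n < m) have orthonormal columns, z ∈ ℂ^m with u = QQ*z ≠ 0 and v = (I−QQ*)z ≠ 0, and ν = ‖z‖. Then the largest singular value of the matrix [Q z] equals √((1 + ν² + √(1+ν⁴+2ν²−4‖v‖²))/2) and the smallest singular value equals √((1 + ν² − √(1+ν⁴+2ν²−4‖v‖²))/2); hence the spectral condition number κ₂([Q z]) equals the square root of the ratio of these two quantities. -/

import Mathlib

/-!
With `c = Qᴴ z`, the Gram matrix `[Q z]ᴴ [Q z]` is the bordered matrix `[[I, c], [cᴴ, ‖z‖²]]`.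
For an eigenpair `(x, t), μ` with `μ ≠ 1` the first block row gives `x = t c / (μ - 1)`, and the
last row then forces `μ² - (1 + ν²) μ + ‖v‖² = 0`, because `‖z‖² - ‖c‖² = ‖v‖²` (Pythagoras, as
`‖c‖ = ‖u‖`); conversely `(c, μ - 1)` is an eigenvector for each root. Every other eigenvalue is `1`,
and the quadratic takes the value `-‖u‖² < 0` at `1`, so its two roots bracket `1` and are the
extreme eigenvalues.
-/

open Matrix

/-- The matrix `[Q z]`: `Q` with the column `z` appended. -/
def appendCol {m n : ℕ} (Q : Matrix (Fin m) (Fin n) ℂ) (z : Fin m → ℂ) :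
    Matrix (Fin m) (Fin (n + 1)) ℂ :=
  Matrix.of fun i j => Fin.lastCases (z i) (fun k => Q i k) j

lemma star_dotProduct_self_eq_sum_norm_sq {ι : Type*} [Fintype ι] (w : ι → ℂ) :
    star w ⬝ᵥ w = ((∑ i, ‖w i‖ ^ 2 : ℝ) : ℂ) := by
  push_cast
  exact Finset.sum_congr rfl fun i _ => RCLike.conj_mul (w i)

lemma sum_norm_sq_pos {ι : Type*} [Fintype ι] {w : ι → ℂ} (hw : w ≠ 0) :
    0 < ∑ i, ‖w i‖ ^ 2 := by
  obtain ⟨i, hi⟩ := Function.ne_iff.1 hw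
  exact Finset.sum_pos' (fun j _ => by positivity) ⟨i, Finset.mem_univ i, by positivity⟩

lemma Matrix.IsHermitian.exists_eigenvalues_eq_of_mulVec_eq_smul {𝕜 n : Type*} [RCLike 𝕜]
    [Fintype n] [DecidableEq n] {H : Matrix n n 𝕜} (hH : H.IsHermitian) {μ : ℝ} {x : n → 𝕜}
    (hx : x ≠ 0) (h : H *ᵥ x = (μ : 𝕜) • x) : ∃ i, hH.eigenvalues i = μ := by
  have hμ : Module.End.HasEigenvalue (toLin' H) (μ : 𝕜) :=
    Module.End.hasEigenvalue_of_hasEigenvector ⟨Module.End.mem_eigenspace_iff.2 h, hx⟩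
  have hspec : μ ∈ spectrum ℝ H :=
    spectrum.of_algebraMap_mem 𝕜 (spectrum_toLin' H ▸ hμ.mem_spectrum)
  rwa [hH.spectrum_real_eq_range_eigenvalues] at hspec

section Isometry

variable {m n : Type*} [Fintype m] [Fintype n] [DecidableEq n] {Q : Matrix m n ℂ}

lemma star_mulVec_dotProduct_mulVec_of_conjTranspose_mul_self (hQ : Qᴴ * Q = 1)
    (w : n → ℂ) : star (Q *ᵥ w) ⬝ᵥ (Q *ᵥ w) = star w ⬝ᵥ w := by
  rw [star_mulVec, ← dotProduct_mulVec, mulVec_mulVec, hQ, one_mulVec]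

lemma conjTranspose_mulVec_sub_mulVec_conjTranspose_mulVec (hQ : Qᴴ * Q = 1) (z : m → ℂ) :
    Qᴴ *ᵥ (z - Q *ᵥ (Qᴴ *ᵥ z)) = 0 := by
  rw [mulVec_sub, mulVec_mulVec, hQ, one_mulVec, sub_self]

lemma star_dotProduct_self_eq_add_of_conjTranspose_mul_self (hQ : Qᴴ * Q = 1) (z : m → ℂ) :
    star z ⬝ᵥ z = star (Qᴴ *ᵥ z) ⬝ᵥ (Qᴴ *ᵥ z)
      + star (z - Q *ᵥ (Qᴴ *ᵥ z)) ⬝ᵥ (z - Q *ᵥ (Qᴴ *ᵥ z)) := by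
  set u := Q *ᵥ (Qᴴ *ᵥ z)
  have horth : star u ⬝ᵥ (z - u) = 0 := by
    rw [star_mulVec, ← dotProduct_mulVec,
      conjTranspose_mulVec_sub_mulVec_conjTranspose_mulVec hQ, dotProduct_zero]
  have horth' : star (z - u) ⬝ᵥ u = 0 := by
    rw [star_dotProduct, horth, star_zero]
  rw [← star_mulVec_dotProduct_mulVec_of_conjTranspose_mul_self hQ]
  conv_lhs => rw [show z = u + (z - u) by abel]
  simp only [star_add, add_dotProduct, dotProduct_add, horth, horth']
  ring

lemma sum_norm_sq_eq_add_of_conjTranspose_mul_self (hQ : Qᴴ * Q = 1) (z : m → ℂ) :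
    ∑ i, ‖z i‖ ^ 2 = ∑ i, ‖(Q *ᵥ (Qᴴ *ᵥ z)) i‖ ^ 2 + ∑ i, ‖(z - Q *ᵥ (Qᴴ *ᵥ z)) i‖ ^ 2 := by
  have h := star_dotProduct_self_eq_add_of_conjTranspose_mul_self hQ z
  rw [← star_mulVec_dotProduct_mulVec_of_conjTranspose_mul_self hQ (Qᴴ *ᵥ z)] at h
  simp only [star_dotProduct_self_eq_sum_norm_sq] at h
  exact_mod_cast h

end Isometry

section AppendCol

variable {m n : ℕ} (Q : Matrix (Fin m) (Fin n) ℂ) (z : Fin m → ℂ)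

lemma appendCol_mulVec (x : Fin (n + 1) → ℂ) :
    appendCol Q z *ᵥ x = Q *ᵥ Fin.init x + x (Fin.last n) • z := by
  ext i
  simp [appendCol, mulVec, dotProduct, Fin.sum_univ_castSucc, Fin.init, mul_comm]

lemma conjTranspose_appendCol_mulVec_castSucc (y : Fin m → ℂ) (j : Fin n) :
    ((appendCol Q z)ᴴ *ᵥ y) j.castSucc = (Qᴴ *ᵥ y) j := by
  simp [appendCol, mulVec, dotProduct, conjTranspose_apply]

lemma conjTranspose_appendCol_mulVec_last (y : Fin m → ℂ) :
    ((appendCol Q z)ᴴ *ᵥ y) (Fin.last n) = star z ⬝ᵥ y := by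
  simp [appendCol, mulVec, dotProduct, conjTranspose_apply]

variable {Q}

lemma gram_appendCol_mulVec_castSucc (hQ : Qᴴ * Q = 1) (x : Fin (n + 1) → ℂ) (j : Fin n) :
    (((appendCol Q z)ᴴ * appendCol Q z) *ᵥ x) j.castSucc
      = x j.castSucc + (Qᴴ *ᵥ z) j * x (Fin.last n) := by
  rw [← mulVec_mulVec, conjTranspose_appendCol_mulVec_castSucc, appendCol_mulVec, mulVec_add,
    mulVec_mulVec, hQ, one_mulVec, mulVec_smul]
  simp [Fin.init, mul_comm]

lemma gram_appendCol_mulVec_last (x : Fin (n + 1) → ℂ) :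
    (((appendCol Q z)ᴴ * appendCol Q z) *ᵥ x) (Fin.last n)
      = star (Qᴴ *ᵥ z) ⬝ᵥ Fin.init x + (star z ⬝ᵥ z) * x (Fin.last n) := by
  rw [← mulVec_mulVec, conjTranspose_appendCol_mulVec_last, appendCol_mulVec, dotProduct_add,
    dotProduct_smul, dotProduct_mulVec, star_mulVec, conjTranspose_conjTranspose, smul_eq_mul,
    mul_comm]

end AppendCol

section GramEigen

variable {m n : ℕ} {Q : Matrix (Fin m) (Fin n) ℂ} (z : Fin m → ℂ)

lemma eq_one_or_of_gram_appendCol_mulVec_eq_smul (hQ : Qᴴ * Q = 1) {μ : ℂ}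
    {x : Fin (n + 1) → ℂ} (hx : x ≠ 0)
    (h : ((appendCol Q z)ᴴ * appendCol Q z) *ᵥ x = μ • x) :
    μ = 1 ∨ μ ^ 2 - (1 + star z ⬝ᵥ z) * μ
      + star (z - Q *ᵥ (Qᴴ *ᵥ z)) ⬝ᵥ (z - Q *ᵥ (Qᴴ *ᵥ z)) = 0 := by
  set c := Qᴴ *ᵥ z
  set t := x (Fin.last n)
  refine or_iff_not_imp_left.2 fun hμ => ?_
  have hinit : (μ - 1) • Fin.init x = t • c := funext fun j => by
    have hj := congrFun h j.castSucc
    rw [gram_appendCol_mulVec_castSucc z hQ] at hj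
    simp only [Pi.smul_apply, smul_eq_mul, Fin.init] at hj ⊢
    linear_combination -hj
  have ht : t ≠ 0 := by
    intro ht
    rw [ht, zero_smul, smul_eq_zero, sub_eq_zero] at hinit
    refine hx (funext fun i => Fin.lastCases ht (fun j => ?_) i)
    exact congrFun (hinit.resolve_left hμ) j
  have hlast := congrFun h (Fin.last n)
  rw [gram_appendCol_mulVec_last, Pi.smul_apply, smul_eq_mul] at hlast
  have hdot := congrArg (star c ⬝ᵥ ·) hinit
  simp only [dotProduct_smul, smul_eq_mul] at hdot
  rw [star_dotProduct_self_eq_add_of_conjTranspose_mul_self hQ z] at hlast ⊢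
  refine (mul_eq_zero.1 ?_).resolve_left ht
  linear_combination (1 - μ) * hlast + hdot

lemma gram_appendCol_mulVec_snoc (hQ : Qᴴ * Q = 1) {μ : ℂ}
    (hμ : μ ^ 2 - (1 + star z ⬝ᵥ z) * μ
      + star (z - Q *ᵥ (Qᴴ *ᵥ z)) ⬝ᵥ (z - Q *ᵥ (Qᴴ *ᵥ z)) = 0) :
    ((appendCol Q z)ᴴ * appendCol Q z) *ᵥ Fin.snoc (α := fun _ => ℂ) (Qᴴ *ᵥ z) (μ - 1)
      = μ • Fin.snoc (α := fun _ => ℂ) (Qᴴ *ᵥ z) (μ - 1) := by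
  have hN := star_dotProduct_self_eq_add_of_conjTranspose_mul_self hQ z
  funext i
  refine Fin.lastCases ?_ (fun j => ?_) i
  · rw [gram_appendCol_mulVec_last, Fin.init_snoc]
    simp only [Fin.snoc_last, Pi.smul_apply, smul_eq_mul]
    linear_combination -hμ - hN
  · rw [gram_appendCol_mulVec_castSucc z hQ]
    simp only [Fin.snoc_castSucc, Fin.snoc_last, Pi.smul_apply, smul_eq_mul]
    ring

lemma eigenvalues_gram_appendCol_eq_one_or (hQ : Qᴴ * Q = 1) (i : Fin (n + 1)) :
    (isHermitian_conjTranspose_mul_self (appendCol Q z)).eigenvalues i = 1 ∨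
      (isHermitian_conjTranspose_mul_self (appendCol Q z)).eigenvalues i ^ 2
        - (1 + ∑ k, ‖z k‖ ^ 2) * (isHermitian_conjTranspose_mul_self (appendCol Q z)).eigenvalues i
        + ∑ k, ‖(z - Q *ᵥ (Qᴴ *ᵥ z)) k‖ ^ 2 = 0 := by
  set hH := isHermitian_conjTranspose_mul_self (appendCol Q z)
  have hx : ⇑(hH.eigenvectorBasis i) ≠ 0 := fun h0 =>
    hH.eigenvectorBasis.orthonormal.ne_zero i (by ext j; exact congrFun h0 j)
  have hev : ((appendCol Q z)ᴴ * appendCol Q z) *ᵥ ⇑(hH.eigenvectorBasis i)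
      = (hH.eigenvalues i : ℂ) • ⇑(hH.eigenvectorBasis i) := by
    rw [hH.mulVec_eigenvectorBasis]; rfl
  have := eq_one_or_of_gram_appendCol_mulVec_eq_smul z hQ hx hev
  simp only [star_dotProduct_self_eq_sum_norm_sq] at this
  exact_mod_cast this

lemma exists_eigenvalues_gram_appendCol_eq (hQ : Qᴴ * Q = 1) {μ : ℝ} (hμ1 : μ ≠ 1)
    (hμ : μ ^ 2 - (1 + ∑ k, ‖z k‖ ^ 2) * μ + ∑ k, ‖(z - Q *ᵥ (Qᴴ *ᵥ z)) k‖ ^ 2 = 0) :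
    ∃ i, (isHermitian_conjTranspose_mul_self (appendCol Q z)).eigenvalues i = μ := by
  have hμC : (μ : ℂ) ^ 2 - (1 + star z ⬝ᵥ z) * μ
      + star (z - Q *ᵥ (Qᴴ *ᵥ z)) ⬝ᵥ (z - Q *ᵥ (Qᴴ *ᵥ z)) = 0 := by
    simp only [star_dotProduct_self_eq_sum_norm_sq]
    exact_mod_cast hμ
  refine (isHermitian_conjTranspose_mul_self _).exists_eigenvalues_eq_of_mulVec_eq_smul
    (x := Fin.snoc (α := fun _ => ℂ) (Qᴴ *ᵥ z) (μ - 1)) ?_ (gram_appendCol_mulVec_snoc z hQ hμC)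
  intro h0
  have := congrFun h0 (Fin.last n)
  rw [Fin.snoc_last, Pi.zero_apply, sub_eq_zero] at this
  exact hμ1 (by exact_mod_cast this)

end GramEigen

section QuadraticRoots

variable {S P : ℝ}

lemma sq_sub_mul_add_eq_zero_iff (hdisc : 0 ≤ S ^ 2 - 4 * P) (μ : ℝ) :
    μ ^ 2 - S * μ + P = 0 ↔
      μ = (S + √(S ^ 2 - 4 * P)) / 2 ∨ μ = (S - √(S ^ 2 - 4 * P)) / 2 := by
  have h := quadratic_eq_zero_iff one_ne_zero (b := -S) (c := P)
    (by rw [discrim, Real.mul_self_sqrt hdisc]; ring) μ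
  simp only [neg_neg, mul_one, one_mul] at h
  rw [← h]
  ring_nf

lemma sq_sub_four_mul_pos_of_one_sub_add_neg (h1 : 1 - S + P < 0) : 0 < S ^ 2 - 4 * P := by
  nlinarith [sq_nonneg (S - 2)]

lemma one_lt_add_sqrt_div_two (h1 : 1 - S + P < 0) : 1 < (S + √(S ^ 2 - 4 * P)) / 2 := by
  have hD := sq_sub_four_mul_pos_of_one_sub_add_neg h1
  nlinarith [Real.sq_sqrt hD.le, Real.sqrt_nonneg (S ^ 2 - 4 * P)]

lemma sub_sqrt_div_two_lt_one (h1 : 1 - S + P < 0) : (S - √(S ^ 2 - 4 * P)) / 2 < 1 := by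
  have hD := sq_sub_four_mul_pos_of_one_sub_add_neg h1
  nlinarith [Real.sq_sqrt hD.le, Real.sqrt_nonneg (S ^ 2 - 4 * P)]

end QuadraticRoots

lemma isGreatest_isLeast_range_of_eq_one_or {ι : Type*} {f : ι → ℝ} {S P : ℝ}
    (h1 : 1 - S + P < 0) (hf : ∀ i, f i = 1 ∨ f i ^ 2 - S * f i + P = 0)
    (hroot : ∀ μ, μ ≠ 1 → μ ^ 2 - S * μ + P = 0 → ∃ i, f i = μ) :
    IsGreatest (Set.range f) ((S + √(S ^ 2 - 4 * P)) / 2) ∧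
      IsLeast (Set.range f) ((S - √(S ^ 2 - 4 * P)) / 2) := by
  have hD := (sq_sub_four_mul_pos_of_one_sub_add_neg h1).le
  have hlo := sub_sqrt_div_two_lt_one h1
  have hhi := one_lt_add_sqrt_div_two h1
  have hle : (S - √(S ^ 2 - 4 * P)) / 2 ≤ (S + √(S ^ 2 - 4 * P)) / 2 := by linarith
  have hbounds : ∀ i, (S - √(S ^ 2 - 4 * P)) / 2 ≤ f i ∧ f i ≤ (S + √(S ^ 2 - 4 * P)) / 2 := by
    intro i
    rcases hf i with h | h
    · rw [h]; exact ⟨hlo.le, hhi.le⟩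
    · rcases (sq_sub_mul_add_eq_zero_iff hD _).1 h with h | h <;> rw [h]
      exacts [⟨hle, le_rfl⟩, ⟨le_rfl, hle⟩]
  obtain ⟨ihi, hihi⟩ := hroot _ hhi.ne' ((sq_sub_mul_add_eq_zero_iff hD _).2 (.inl rfl))
  obtain ⟨ilo, hilo⟩ := hroot _ hlo.ne ((sq_sub_mul_add_eq_zero_iff hD _).2 (.inr rfl))
  exact ⟨⟨⟨ihi, hihi⟩, Set.forall_mem_range.2 fun i => (hbounds i).2⟩,
    ⟨⟨ilo, hilo⟩, Set.forall_mem_range.2 fun i => (hbounds i).1⟩⟩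

lemma iSup_sqrt_eq_of_isGreatest {ι : Type*} {f : ι → ℝ} {a : ℝ}
    (h : IsGreatest (Set.range f) a) : ⨆ i, √(f i) = √a := by
  obtain ⟨⟨i, hi⟩, hle⟩ := h
  have : Nonempty ι := ⟨i⟩
  exact ciSup_eq_of_forall_le_of_forall_lt_exists_gt
    (fun j => Real.sqrt_le_sqrt (hle ⟨j, rfl⟩)) fun w hw => ⟨i, hi ▸ hw⟩

lemma iInf_sqrt_eq_of_isLeast {ι : Type*} {f : ι → ℝ} {a : ℝ}
    (h : IsLeast (Set.range f) a) : ⨅ i, √(f i) = √a := by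
  obtain ⟨⟨i, hi⟩, hle⟩ := h
  have : Nonempty ι := ⟨i⟩
  exact ciInf_eq_of_forall_ge_of_forall_gt_exists_lt
    (fun j => Real.sqrt_le_sqrt (hle ⟨j, rfl⟩)) fun w hw => ⟨i, hi ▸ hw⟩

theorem stmt10_general {m n : ℕ} (Q : Matrix (Fin m) (Fin n) ℂ)
    (hQ : Qᴴ * Q = 1) (z u v : Fin m → ℂ)
    (hu : u = (Q * Qᴴ) *ᵥ z) (hv : v = z - u)
    (hu0 : u ≠ 0)
    (ν : ℝ) (hν : ν = Real.sqrt (∑ i, ‖z i‖ ^ 2)) :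
    (⨆ i, Real.sqrt ((isHermitian_conjTranspose_mul_self (appendCol Q z)).eigenvalues i))
        = Real.sqrt ((1 + ν ^ 2 + Real.sqrt (1 + ν ^ 4 + 2 * ν ^ 2 - 4 * ∑ i, ‖v i‖ ^ 2)) / 2) ∧
    (⨅ i, Real.sqrt ((isHermitian_conjTranspose_mul_self (appendCol Q z)).eigenvalues i))
        = Real.sqrt ((1 + ν ^ 2 - Real.sqrt (1 + ν ^ 4 + 2 * ν ^ 2 - 4 * ∑ i, ‖v i‖ ^ 2)) / 2) ∧
    (⨆ i, Real.sqrt ((isHermitian_conjTranspose_mul_self (appendCol Q z)).eigenvalues i)) /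
      (⨅ i, Real.sqrt ((isHermitian_conjTranspose_mul_self (appendCol Q z)).eigenvalues i))
        = Real.sqrt
            (((1 + ν ^ 2 + Real.sqrt (1 + ν ^ 4 + 2 * ν ^ 2 - 4 * ∑ i, ‖v i‖ ^ 2)) / 2) /
              ((1 + ν ^ 2 - Real.sqrt (1 + ν ^ 4 + 2 * ν ^ 2 - 4 * ∑ i, ‖v i‖ ^ 2)) / 2)) := by
  rw [← mulVec_mulVec] at hu
  subst hu hv
  have hN : ∑ i, ‖z i‖ ^ 2 = ν ^ 2 := by rw [hν, Real.sq_sqrt (by positivity)]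
  have h1 : 1 - (1 + ν ^ 2) + ∑ i, ‖(z - Q *ᵥ (Qᴴ *ᵥ z)) i‖ ^ 2 < 0 := by
    have hpyth := sum_norm_sq_eq_add_of_conjTranspose_mul_self hQ z
    have hu_pos := sum_norm_sq_pos hu0
    linarith
  obtain ⟨hmax, hmin⟩ := isGreatest_isLeast_range_of_eq_one_or h1
    (fun i => hN ▸ eigenvalues_gram_appendCol_eq_one_or z hQ i)
    (fun μ hμ1 hμ => exists_eigenvalues_gram_appendCol_eq z hQ hμ1 (hN ▸ hμ))
  have hdisc : ∀ P : ℝ, 1 + ν ^ 4 + 2 * ν ^ 2 - 4 * P = (1 + ν ^ 2) ^ 2 - 4 * P := fun P => by ring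
  rw [hdisc, iSup_sqrt_eq_of_isGreatest hmax, iInf_sqrt_eq_of_isLeast hmin]
  exact ⟨rfl, rfl, (Real.sqrt_div (by linarith [one_lt_add_sqrt_div_two h1]) _).symm⟩

/-- the extreme singular values of `[Q z]` (square roots of the
eigenvalues of `[Q z]ᴴ[Q z]`) are `√((1+ν² ± √(1+ν⁴+2ν²−4‖v‖²))/2)`, and the
spectral condition number is the square root of the ratio of these quantities. -/
theorem stmt10 {m n : ℕ} (hmn : n < m) (Q : Matrix (Fin m) (Fin n) ℂ)
    (hQ : Qᴴ * Q = 1) (z u v : Fin m → ℂ)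
    (hu : u = (Q * Qᴴ) *ᵥ z) (hv : v = z - u)
    (hu0 : u ≠ 0) (hv0 : v ≠ 0)
    (ν : ℝ) (hν : ν = Real.sqrt (∑ i, ‖z i‖ ^ 2)) :
    (⨆ i, Real.sqrt ((isHermitian_conjTranspose_mul_self (appendCol Q z)).eigenvalues i))
        = Real.sqrt ((1 + ν ^ 2 + Real.sqrt (1 + ν ^ 4 + 2 * ν ^ 2 - 4 * ∑ i, ‖v i‖ ^ 2)) / 2) ∧
    (⨅ i, Real.sqrt ((isHermitian_conjTranspose_mul_self (appendCol Q z)).eigenvalues i))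
        = Real.sqrt ((1 + ν ^ 2 - Real.sqrt (1 + ν ^ 4 + 2 * ν ^ 2 - 4 * ∑ i, ‖v i‖ ^ 2)) / 2) ∧
    (⨆ i, Real.sqrt ((isHermitian_conjTranspose_mul_self (appendCol Q z)).eigenvalues i)) /
      (⨅ i, Real.sqrt ((isHermitian_conjTranspose_mul_self (appendCol Q z)).eigenvalues i))
        = Real.sqrt
            (((1 + ν ^ 2 + Real.sqrt (1 + ν ^ 4 + 2 * ν ^ 2 - 4 * ∑ i, ‖v i‖ ^ 2)) / 2) /
              ((1 + ν ^ 2 - Real.sqrt (1 + ν ^ 4 + 2 * ν ^ 2 - 4 * ∑ i, ‖v i‖ ^ 2)) / 2)) :=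
  stmt10_general Q hQ z u v hu hv hu0 ν hν
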